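/- arXiv:2407.10664 — 2 statements merged into one kernel-verified Lean document; each statement's English description precedes it below -/
import Mathlib

section
/- Let μ be a finite positive Borel measure on ℝ, and let (x_n), (y_n) be real sequences with y_n > 0, sup_n y_n = Y < ∞, and suppose there exist N ∈ ℕ and Δ > 0 such that Δ/2 ≤ x_{n+1} - x_n ≤ 3Δ/2 for all n ≥ N. If the series ∑_n ∫_ℝ (1+t²)/((t-x_n)² + y_n²) dμ(t) converges, then ∫_{(0,∞)} t² dμ(t) < ∞. -/
open MeasureTheory Set

theorem stmt_1 (μ : Measure ℝ) [IsFiniteMeasure μ] (x y : ℕ → ℝ) (Y : ℝ)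
    (hy : ∀ n, 0 < y n) (hY : ∀ n, y n ≤ Y)
    (N : ℕ) (Δ : ℝ) (hΔ : 0 < Δ)
    (hx : ∀ n ≥ N, Δ / 2 ≤ x (n + 1) - x n ∧ x (n + 1) - x n ≤ 3 * Δ / 2)
    (hsum : ∑' n : ℕ, ∫⁻ t, ENNReal.ofReal ((1 + t ^ 2) / ((t - x n) ^ 2 + (y n) ^ 2)) ∂μ
      < ⊤) :
    ∫⁻ t in Ioi (0 : ℝ), ENNReal.ofReal (t ^ 2) ∂μ < ⊤ := by
  have hY0 : 0 < Y := lt_of_lt_of_le (hy 0) (hY 0)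
  set C : ℝ := (3 * Δ / 2) ^ 2 + Y ^ 2 with hC
  have hC0 : 0 < C := by positivity
  -- growth of x
  have hgrow : ∀ k : ℕ, x N + k * (Δ / 2) ≤ x (N + k) := by
    intro k
    induction k with
    | zero => simp
    | succ k ih =>
      have h := (hx (N + k) (Nat.le_add_right _ _)).1
      push_cast
      show x N + ((k:ℝ) + 1) * (Δ / 2) ≤ x (N + k + 1)
      nlinarith
  -- pointwise bound on each interval
  have key : ∀ k : ℕ, ∫⁻ t in Ioc (x (N + k)) (x (N + k + 1)),
      ENNReal.ofReal ((1 + t ^ 2) / C) ∂μ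
      ≤ ∫⁻ t, ENNReal.ofReal ((1 + t ^ 2) / ((t - x (N + k)) ^ 2 + (y (N + k)) ^ 2)) ∂μ := by
    intro k
    refine le_trans (setLIntegral_mono (by fun_prop) ?_) (setLIntegral_le_lintegral _ _)
    intro t ht
    refine ENNReal.ofReal_le_ofReal ?_
    have h1 : x (N + k) < t := ht.1
    have h2 : t ≤ x (N + k + 1) := ht.2
    have h3 := (hx (N + k) (Nat.le_add_right _ _)).2
    have hyle := hY (N + k)
    have hypos := hy (N + k)
    have hdpos : 0 < (t - x (N + k)) ^ 2 + (y (N + k)) ^ 2 := by positivity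
    have hden : (t - x (N + k)) ^ 2 + (y (N + k)) ^ 2 ≤ C := by
      have ha : (t - x (N + k)) ^ 2 ≤ (3 * Δ / 2) ^ 2 := by nlinarith
      have hb : (y (N + k)) ^ 2 ≤ Y ^ 2 := by nlinarith
      rw [hC]; linarith
    exact div_le_div_of_nonneg_left (by positivity) hdpos hden
  -- the union covers Ioi (x N)
  have hcover : Ioi (x N) ⊆ ⋃ k : ℕ, Ioc (x (N + k)) (x (N + k + 1)) := by
    intro t ht
    have hex : ∃ k : ℕ, t ≤ x (N + k + 1) := by
      obtain ⟨k, hk⟩ := exists_nat_ge ((t - x N) / (Δ / 2))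
      refine ⟨k, ?_⟩
      have h2 : t - x N ≤ k * (Δ / 2) := by
        rw [div_le_iff₀ (by positivity)] at hk; linarith
      have h3 : x N + ((k:ℝ) + 1) * (Δ / 2) ≤ x (N + k + 1) := by
        have := hgrow (k + 1); push_cast at this; exact this
      nlinarith
    classical
    let k0 := Nat.find hex
    have hk0 : t ≤ x (N + k0 + 1) := Nat.find_spec hex
    have hlt : x (N + k0) < t := by
      rcases Nat.eq_zero_or_pos k0 with h0 | h0
      · simpa [h0] using ht
      · have := Nat.find_min hex (m := k0 - 1) (by omega)
        push_neg at this
        have : x (N + (k0 - 1) + 1) < t := this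
        have heq : N + (k0 - 1) + 1 = N + k0 := by omega
        rwa [heq] at this
    exact mem_iUnion.2 ⟨k0, hlt, hk0⟩
  -- finiteness of ∫ (1+t²)/C over Ioi (x N)
  have hfin : ∫⁻ t in Ioi (x N), ENNReal.ofReal ((1 + t ^ 2) / C) ∂μ < ⊤ := by
    calc ∫⁻ t in Ioi (x N), ENNReal.ofReal ((1 + t ^ 2) / C) ∂μ
        ≤ ∫⁻ t in ⋃ k : ℕ, Ioc (x (N + k)) (x (N + k + 1)),
            ENNReal.ofReal ((1 + t ^ 2) / C) ∂μ :=
          lintegral_mono_set hcover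
      _ ≤ ∑' k : ℕ, ∫⁻ t in Ioc (x (N + k)) (x (N + k + 1)),
            ENNReal.ofReal ((1 + t ^ 2) / C) ∂μ := lintegral_iUnion_le _ _
      _ ≤ ∑' k : ℕ, ∫⁻ t, ENNReal.ofReal ((1 + t ^ 2) /
            ((t - x (N + k)) ^ 2 + (y (N + k)) ^ 2)) ∂μ := ENNReal.tsum_le_tsum key
      _ ≤ ∑' n : ℕ, ∫⁻ t, ENNReal.ofReal ((1 + t ^ 2) /
            ((t - x n) ^ 2 + (y n) ^ 2)) ∂μ :=
          ENNReal.tsum_comp_le_tsum_of_injective (fun a b h => by omega) _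
      _ < ⊤ := hsum
  -- split Ioi 0
  set M : ℝ := max (x N) 0 with hM
  have hM0 : 0 ≤ M := le_max_right _ _
  have hsplit : Ioi (0:ℝ) = Ioc 0 M ∪ Ioi M := (Ioc_union_Ioi_eq_Ioi hM0).symm
  rw [hsplit, lintegral_union measurableSet_Ioi (Ioc_disjoint_Ioi le_rfl)]
  have h1 : ∫⁻ t in Ioc (0:ℝ) M, ENNReal.ofReal (t ^ 2) ∂μ < ⊤ := by
    calc ∫⁻ t in Ioc (0:ℝ) M, ENNReal.ofReal (t ^ 2) ∂μ
        ≤ ∫⁻ _ in Ioc (0:ℝ) M, ENNReal.ofReal (M ^ 2) ∂μ := by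
          refine setLIntegral_mono (by fun_prop) ?_
          intro t ht
          exact ENNReal.ofReal_le_ofReal (by nlinarith [ht.1.le, ht.2])
      _ = ENNReal.ofReal (M ^ 2) * μ (Ioc 0 M) := setLIntegral_const _ _
      _ < ⊤ := ENNReal.mul_lt_top ENNReal.ofReal_lt_top (measure_lt_top μ _)
  have h2 : ∫⁻ t in Ioi M, ENNReal.ofReal (t ^ 2) ∂μ < ⊤ := by
    have hb : ∫⁻ t in Ioi M, ENNReal.ofReal (t ^ 2) ∂μ
        ≤ ENNReal.ofReal C * ∫⁻ t in Ioi M, ENNReal.ofReal ((1 + t ^ 2) / C) ∂μ := by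
      rw [← lintegral_const_mul' _ _ ENNReal.ofReal_ne_top]
      refine setLIntegral_mono (by fun_prop) ?_
      intro t _
      rw [← ENNReal.ofReal_mul hC0.le]
      refine ENNReal.ofReal_le_ofReal ?_
      rw [mul_div_cancel₀ _ hC0.ne']
      nlinarith [sq_nonneg t]
    refine lt_of_le_of_lt hb (ENNReal.mul_lt_top ENNReal.ofReal_lt_top ?_)
    exact lt_of_le_of_lt (lintegral_mono_set (Ioi_subset_Ioi (le_max_left _ _))) hfin
  exact ENNReal.add_lt_top.2 ⟨h1, h2⟩
end

section
/- Let ω be a finite positive Borel measure on (-∞, 0] with ∫_{(-∞,0)} |t| dω(t) = +∞. Then the limit as x → +∞ of ∫_{(-∞,0]} (1+tx)/(t-x) dω(t) is +∞. -/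
/-!
For `t ≤ 0 < x` the integrand splits as
`(1 + t x) / (t - x) = x |t| / (x + |t|) - 1 / (x - t)`.
The second term lies in `(0, 1 / x]`, so its integral stays bounded, while the first term
increases with `x` to `|t|`; by monotone convergence its integral tends to
`∫ |t| dω = ∞`.
-/

open MeasureTheory Set Filter Topology

theorem div_sub_eq_mul_neg_div_sub_sub_inv (t x : ℝ) :
    (1 + t * x) / (t - x) = x * -t / (x - t) - (x - t)⁻¹ := by
  rw [← neg_sub x t, div_neg]
  ring

section

variable {t x : ℝ}

theorem mul_neg_div_sub_nonneg (hx : 0 ≤ x) (ht : t ≤ 0) : 0 ≤ x * -t / (x - t) :=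
  div_nonneg (mul_nonneg hx (neg_nonneg.2 ht)) (by linarith)

theorem mul_neg_div_sub_le (hx : 0 ≤ x) (ht : t ≤ 0) : x * -t / (x - t) ≤ x := by
  rcases ht.lt_or_eq with ht | rfl
  · rw [div_le_iff₀ (by linarith)]
    nlinarith
  · simpa using hx

theorem monotoneOn_mul_neg_div_sub (ht : t ≤ 0) :
    MonotoneOn (fun x => x * -t / (x - t)) (Ici 0) := by
  intro x hx y hy hxy
  rcases ht.lt_or_eq with ht | rfl
  · simp only [mem_Ici] at hx hy
    rw [div_le_div_iff₀ (by linarith) (by linarith)]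
    nlinarith [mul_nonneg (neg_nonneg.2 ht.le) (neg_nonneg.2 ht.le)]
  · simp

theorem tendsto_mul_neg_div_sub (t : ℝ) :
    Tendsto (fun x => x * -t / (x - t)) atTop (𝓝 (-t)) := by
  have hlim : Tendsto (fun x => -t - t ^ 2 * (x - t)⁻¹) atTop (𝓝 (-t - t ^ 2 * 0)) :=
    tendsto_const_nhds.sub <| tendsto_const_nhds.mul <|
      tendsto_inv_atTop_zero.comp (tendsto_atTop_add_const_right _ (-t) tendsto_id)
  rw [mul_zero, sub_zero] at hlim
  refine hlim.congr' ?_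
  filter_upwards [eventually_gt_atTop t] with x hx
  field_simp [(sub_pos.2 hx).ne']
  ring

end

theorem tendsto_integral_atTop_of_monotone {α : Type*} [MeasurableSpace α] {μ : Measure α}
    {f : ℕ → α → ℝ} {F : α → ℝ} (hf : ∀ n, Integrable (f n) μ) (hf_nonneg : ∀ n, 0 ≤ᵐ[μ] f n)
    (h_mono : ∀ᵐ a ∂μ, Monotone fun n => f n a)
    (h_tendsto : ∀ᵐ a ∂μ, Tendsto (fun n => f n a) atTop (𝓝 (F a)))
    (hF : ∫⁻ a, ENNReal.ofReal (F a) ∂μ = ⊤) :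
    Tendsto (fun n => ∫ a, f n a ∂μ) atTop atTop := by
  have hlin := lintegral_tendsto_of_tendsto_of_monotone (μ := μ)
    (fun n => (hf n).aemeasurable.ennreal_ofReal)
    (h_mono.mono fun a ha => ENNReal.ofReal_mono.comp ha)
    (h_tendsto.mono fun a ha => (ENNReal.continuous_ofReal.tendsto _).comp ha)
  rw [hF] at hlin
  simp_rw [← ofReal_integral_eq_lintegral_ofReal (hf _) (hf_nonneg _)] at hlin
  exact ENNReal.tendsto_ofReal_nhds_top.1 hlin

section

variable (ω : Measure ℝ) [IsFiniteMeasure ω] {x : ℝ}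

theorem integrableOn_mul_neg_div_sub (hx : 0 ≤ x) :
    IntegrableOn (fun t => x * -t / (x - t)) (Iic 0) ω := by
  refine IntegrableOn.of_bound (measure_lt_top _ _)
    (Measurable.aestronglyMeasurable (by fun_prop)) x ?_
  filter_upwards [ae_restrict_mem measurableSet_Iic] with t ht
  rw [Real.norm_of_nonneg (mul_neg_div_sub_nonneg hx ht)]
  exact mul_neg_div_sub_le hx ht

theorem integrableOn_inv_sub (hx : 0 < x) : IntegrableOn (fun t => (x - t)⁻¹) (Iic 0) ω := by
  refine IntegrableOn.of_bound (measure_lt_top _ _)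
    (Measurable.aestronglyMeasurable (by fun_prop)) x⁻¹ ?_
  filter_upwards [ae_restrict_mem measurableSet_Iic] with t (ht : t ≤ 0)
  rw [norm_inv, Real.norm_of_nonneg (by linarith)]
  exact inv_anti₀ hx (by linarith)

theorem tendsto_setIntegral_mul_neg_div_sub
    (hinf : ∫⁻ t in Iio (0 : ℝ), ENNReal.ofReal |t| ∂ω = ⊤) :
    Tendsto (fun x => ∫ t in Iic (0 : ℝ), x * -t / (x - t) ∂ω) atTop atTop := by
  have hnat : Tendsto (fun n : ℕ => ∫ t in Iic (0 : ℝ), n * -t / (n - t) ∂ω) atTop atTop := by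
    refine tendsto_integral_atTop_of_monotone (F := fun t => |t|)
      (fun n => integrableOn_mul_neg_div_sub ω n.cast_nonneg) (fun n => ?_) ?_ ?_ ?_
    · filter_upwards [ae_restrict_mem measurableSet_Iic] with t ht
      exact mul_neg_div_sub_nonneg n.cast_nonneg ht
    · filter_upwards [ae_restrict_mem measurableSet_Iic] with t ht m n hmn
      exact monotoneOn_mul_neg_div_sub ht (mem_Ici.2 m.cast_nonneg) (mem_Ici.2 n.cast_nonneg)
        (Nat.cast_le.2 hmn)
    · filter_upwards [ae_restrict_mem measurableSet_Iic] with t (ht : t ≤ 0)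
      rw [abs_of_nonpos ht]
      exact (tendsto_mul_neg_div_sub t).comp tendsto_natCast_atTop_atTop
    · exact top_le_iff.1 (hinf ▸ lintegral_mono_set Iio_subset_Iic_self)
  refine tendsto_atTop_atTop.2 fun b => ?_
  obtain ⟨N, hN⟩ := (tendsto_atTop_atTop.1 hnat b)
  refine ⟨N, fun x hx => (hN N le_rfl).trans ?_⟩
  have hx0 : 0 ≤ x := N.cast_nonneg.trans hx
  refine setIntegral_mono_on (integrableOn_mul_neg_div_sub ω N.cast_nonneg)
    (integrableOn_mul_neg_div_sub ω hx0) measurableSet_Iic fun t ht => ?_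
  exact monotoneOn_mul_neg_div_sub ht (mem_Ici.2 N.cast_nonneg) (mem_Ici.2 hx0) hx

end

theorem stmt_3_general (ω : Measure ℝ) [IsFiniteMeasure ω]
    (hinf : ∫⁻ t in Iio (0 : ℝ), ENNReal.ofReal |t| ∂ω = ⊤) :
    Tendsto (fun x : ℝ => ∫ t in Iic (0 : ℝ), (1 + t * x) / (t - x) ∂ω) atTop atTop := by
  refine tendsto_atTop_mono' _ ?_ <| tendsto_atTop_add_const_right _ (-ω.real (Iic 0))
    (tendsto_setIntegral_mul_neg_div_sub ω hinf)
  filter_upwards [eventually_ge_atTop 1] with x hx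
  have hx0 : 0 < x := by linarith
  have hinv : ∫ t in Iic (0 : ℝ), (x - t)⁻¹ ∂ω ≤ ω.real (Iic 0) := by
    refine (Real.le_norm_self _).trans <| (norm_setIntegral_le_of_norm_le_const (C := 1)
      (measure_lt_top ω (Iic 0)) fun t ht => ?_).trans_eq (one_mul _)
    have ht : t ≤ 0 := ht
    rw [norm_inv, Real.norm_of_nonneg (by linarith)]
    exact inv_le_one_of_one_le₀ (by linarith)
  calc ∫ t in Iic 0, x * -t / (x - t) ∂ω + -ω.real (Iic 0)
      ≤ ∫ t in Iic 0, x * -t / (x - t) ∂ω - ∫ t in Iic (0 : ℝ), (x - t)⁻¹ ∂ω := by linarith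
    _ = ∫ t in Iic 0, (x * -t / (x - t) - (x - t)⁻¹) ∂ω :=
      (integral_sub (integrableOn_mul_neg_div_sub ω hx0.le) (integrableOn_inv_sub ω hx0)).symm
    _ = ∫ t in Iic (0 : ℝ), (1 + t * x) / (t - x) ∂ω :=
      setIntegral_congr_fun measurableSet_Iic fun t _ =>
        (div_sub_eq_mul_neg_div_sub_sub_inv t x).symm

theorem stmt_3 (ω : Measure ℝ) [IsFiniteMeasure ω] (hsupp : ω (Ioi 0) = 0)
    (hinf : ∫⁻ t in Iio (0 : ℝ), ENNReal.ofReal |t| ∂ω = ⊤) :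
    Tendsto (fun x : ℝ => ∫ t in Iic (0 : ℝ), (1 + t * x) / (t - x) ∂ω) atTop atTop :=
  stmt_3_general ω hinf
end
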